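/- arXiv:1905.10634 — 3 statements merged into one kernel-verified Lean document; each statement's English description precedes it below -/
import Mathlib

section
/- Under the same setup as the conditional split-conformal coverage guarantee (fixed measurable l < m < u on ℝ^d, n i.i.d. calibration pairs plus an independent test pair (X,Y) from μ, atomless law of the conformity score c', k = ⌈(1−α)(n+1)⌉ ≤ n, ĉ = c₍ₖ₎), the coverage probability is also bounded above: P( m(X) − ĉ·(m(X) − l(X)) ≤ Y ≤ m(X) + ĉ·(u(X) − m(X)) ) ≤ 1 − α + 1/(n+1). -/
/-!
Coverage of the test point means exactly that its score `c'` is at most `ĉ = c₍ₖ₎`, so that fewer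
than `k` of the `n + 1` scores lie strictly below `c'`. The `n + 1` scores are i.i.d. with an
atomless law, hence almost surely distinct and exchangeable. For distinct values the numbers of
entries strictly below each entry are distinct, so at most `k` of the `n + 1` scores have fewer
than `k` entries below them; by exchangeability each score does so with the same probability,
which is therefore at most `k / (n + 1) ≤ 1 - α + 1 / (n + 1)`.
-/

open MeasureTheory ProbabilityTheory

/-- The `k`-th smallest entry (zero-indexed `k : Fin n`) of a tuple `v : Fin n → ℝ`. -/
noncomputable def kthSmallest {n : ℕ} (v : Fin n → ℝ) (k : Fin n) : ℝ :=
  v (Tuple.sort v k)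

open scoped Finset ENNReal

section LowerCount

variable {ι α : Type*} [Fintype ι] [LinearOrder α]

def lowerCount (v : ι → α) (j : ι) : ℕ := #{i | v i < v j}

theorem lowerCount_comp_perm (v : ι → α) (σ : Equiv.Perm ι) (j : ι) :
    lowerCount (v ∘ σ) j = lowerCount v (σ j) := by
  simp only [lowerCount, Finset.card_filter, Function.comp_apply]
  exact Equiv.sum_comp σ fun i => if v i < v (σ j) then 1 else 0

theorem lowerCount_lt_lowerCount {v : ι → α} {i j : ι} (h : v i < v j) :
    lowerCount v i < lowerCount v j := by
  refine Finset.card_lt_card ⟨fun a ha => ?_, fun hsub => ?_⟩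
  · simp only [Finset.mem_filter, Finset.mem_univ, true_and] at ha ⊢
    exact ha.trans h
  · have hi : i ∈ ({a | v a < v j} : Finset ι) := by simpa using h
    exact lt_irrefl (v i) (Finset.mem_filter.mp (hsub hi)).2

theorem lowerCount_injective {v : ι → α} (hv : Function.Injective v) :
    Function.Injective (lowerCount v) := by
  intro i j hij
  rcases lt_trichotomy (v i) (v j) with h | h | h
  · exact absurd hij (lowerCount_lt_lowerCount h).ne
  · exact hv h
  · exact absurd hij (lowerCount_lt_lowerCount h).ne'

theorem card_lowerCount_lt_le {v : ι → α} (hv : Function.Injective v) (k : ℕ) :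
    #{j | lowerCount v j < k} ≤ k := by
  simpa using Finset.card_le_card_of_injOn (lowerCount v) (t := Finset.range k)
    (fun j hj => by simpa using hj) (lowerCount_injective hv).injOn

end LowerCount

theorem card_lt_le_of_le_kthSmallest {n : ℕ} (w : Fin n → ℝ) (j : Fin n) {c : ℝ}
    (hc : c ≤ kthSmallest w j) : #{i | w i < c} ≤ j := by
  set σ := Tuple.sort w
  calc #{i | w i < c} = #{i | w (σ i) < c} := by
        simp only [Finset.card_filter]
        exact (Equiv.sum_comp σ fun i => if w i < c then 1 else 0).symm
    _ ≤ #(Finset.Iio j) := Finset.card_le_card fun i hi => by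
        simp only [Finset.mem_filter, Finset.mem_univ, true_and] at hi
        by_contra hij
        exact (hc.trans (Tuple.monotone_sort w (not_lt.mp (by simpa using hij)))).not_gt hi
    _ = j := Fin.card_Iio j

theorem lowerCount_last_le_of_le_kthSmallest {n : ℕ} (w : Fin (n + 1) → ℝ) (j : Fin n)
    (h : w (Fin.last n) ≤ kthSmallest (fun i => w i.castSucc) j) :
    lowerCount w (Fin.last n) ≤ j := by
  have hsplit : lowerCount w (Fin.last n) = #{i : Fin n | w i.castSucc < w (Fin.last n)} := by
    simp only [lowerCount, Finset.card_filter, Fin.sum_univ_castSucc, lt_irrefl, if_false,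
      add_zero]
  exact hsplit ▸ card_lt_le_of_le_kthSmallest _ j h

theorem measurableSet_lowerCount_lt {ι : Type*} [Fintype ι] (j : ι) (k : ℕ) :
    MeasurableSet {v : ι → ℝ | lowerCount v j < k} := by
  have hmeas : Measurable fun v : ι → ℝ => lowerCount v j := by
    simp only [lowerCount, Finset.card_filter]
    refine Finset.measurable_sum _ fun i _ => Measurable.ite ?_ measurable_const measurable_const
    exact measurableSet_lt (measurable_pi_apply i) (measurable_pi_apply j)
  exact measurableSet_lt hmeas measurable_const

section Exchangeable

variable {ι : Type*} [Fintype ι] {ν : Measure (ι → ℝ)}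

theorem measure_lowerCount_lt_eq [DecidableEq ι]
    (hν : ∀ σ : Equiv.Perm ι, ν.map (fun v => v ∘ σ) = ν) (i j : ι) (k : ℕ) :
    ν {v | lowerCount v i < k} = ν {v | lowerCount v j < k} := by
  have hpre : (fun v : ι → ℝ => v ∘ Equiv.swap i j) ⁻¹' {v | lowerCount v j < k}
      = {v | lowerCount v i < k} := by
    ext v
    simp [lowerCount_comp_perm]
  have hmeas : Measurable fun v : ι → ℝ => v ∘ Equiv.swap i j := by fun_prop
  conv_rhs => rw [← hν (Equiv.swap i j), Measure.map_apply hmeas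
    (measurableSet_lowerCount_lt j k), hpre]

theorem card_mul_measure_lowerCount_lt_le
    (hν : ∀ σ : Equiv.Perm ι, ν.map (fun v => v ∘ σ) = ν)
    (hinj : ∀ᵐ v ∂ν, Function.Injective v) (j : ι) (k : ℕ) :
    Fintype.card ι * ν {v | lowerCount v j < k} ≤ k * ν Set.univ := by
  classical
  calc Fintype.card ι * ν {v | lowerCount v j < k}
      = ∑ i : ι, ν {v | lowerCount v i < k} := by
        simp [measure_lowerCount_lt_eq hν _ j]
    _ = ∫⁻ v, ∑ i : ι, {v | lowerCount v i < k}.indicator 1 v ∂ν := by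
        rw [lintegral_finsetSum _ fun i _ =>
          measurable_one.indicator (measurableSet_lowerCount_lt i k)]
        simp only [lintegral_indicator_one (measurableSet_lowerCount_lt _ k)]
    _ ≤ ∫⁻ _, (k : ℝ≥0∞) ∂ν := lintegral_mono_ae <| hinj.mono fun v hv => by
        simp only [Set.indicator_apply, Set.mem_ofPred_eq, Pi.one_apply]
        rw [Finset.sum_boole]
        exact_mod_cast card_lowerCount_lt_le hv k
    _ = k * ν Set.univ := lintegral_const _

end Exchangeable

theorem ProbabilityTheory.IndepFun.measure_eq_eq_zero {Ω : Type*} [MeasurableSpace Ω]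
    {P : Measure Ω} [IsFiniteMeasure P] {X Y : Ω → ℝ} (hX : Measurable X) (hY : Measurable Y)
    (h : IndepFun X Y P) [NullSingletonClass (P.map X)] : P {ω | X ω = Y ω} = 0 := by
  have hdiag : MeasurableSet {p : ℝ × ℝ | p.1 = p.2} :=
    measurableSet_eq_fun measurable_fst measurable_snd
  change P ((fun ω => (X ω, Y ω)) ⁻¹' {p | p.1 = p.2}) = 0
  rw [← Measure.map_apply (hX.prodMk hY) hdiag,
    (indepFun_iff_map_prod_eq_prod_map_map hX.aemeasurable hY.aemeasurable).mp h,
    Measure.prod_apply_symm hdiag]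
  simp

namespace MeasureTheory.Measure

variable {ι : Type*} [Fintype ι] (ρ : Measure ℝ)

theorem pi_map_comp_perm [SigmaFinite ρ] (σ : Equiv.Perm ι) :
    (Measure.pi fun _ : ι => ρ).map (fun v => v ∘ σ) = Measure.pi fun _ => ρ :=
  (measurePreserving_arrowCongr' (fun _ => ρ) (fun _ => ρ) σ.symm (MeasurableEquiv.refl ℝ)
    fun _ => MeasurePreserving.id ρ).map_eq

theorem ae_injective_pi [IsProbabilityMeasure ρ] [NullSingletonClass ρ] :
    ∀ᵐ v ∂Measure.pi (fun _ : ι => ρ), Function.Injective v := by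
  have hties : ∀ i j, ∀ᵐ v ∂Measure.pi (fun _ : ι => ρ), i ≠ j → v i ≠ v j := by
    intro i j
    rcases eq_or_ne i j with rfl | hij
    · exact .of_forall fun _ h => absurd rfl h
    have hindep : IndepFun (fun v : ι → ℝ => v i) (fun v => v j) (Measure.pi fun _ => ρ) :=
      (iIndepFun_pi (X := fun _ => id) fun _ => aemeasurable_id).indepFun hij
    have : NullSingletonClass ((Measure.pi fun _ : ι => ρ).map fun v => v i) := by
      rwa [(measurePreserving_eval (fun _ : ι => ρ) i).map_eq]
    exact (measure_eq_zero_iff_ae_notMem.mp (hindep.measure_eq_eq_zero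
      (measurable_pi_apply i) (measurable_pi_apply j))).mono fun _ hv _ => hv
  filter_upwards [ae_all_iff.mpr fun i => ae_all_iff.mpr (hties i)] with v hv i j
  exact not_imp_not.mp (hv i j)

theorem card_mul_pi_lowerCount_lt_le [IsProbabilityMeasure ρ] [NullSingletonClass ρ] (j : ι)
    (k : ℕ) : Fintype.card ι * Measure.pi (fun _ : ι => ρ) {v | lowerCount v j < k} ≤ k := by
  simpa using card_mul_measure_lowerCount_lt_le (pi_map_comp_perm ρ) (ae_injective_pi ρ) j k

end MeasureTheory.Measure

theorem ProbabilityTheory.iIndepFun.map_comp_eq_pi {Ω ι β γ : Type*} [MeasurableSpace Ω]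
    [MeasurableSpace β] [MeasurableSpace γ] [Fintype ι] {P : Measure Ω} {μ : Measure β}
    {W : ι → Ω → β} (hW : ∀ i, Measurable (W i)) (hindep : iIndepFun W P)
    (hlaw : ∀ i, P.map (W i) = μ) {f : β → γ} (hf : Measurable f) :
    P.map (fun ω i => f (W i ω)) = Measure.pi fun _ => μ.map f := by
  refine ((hindep.comp _ fun _ => hf).map_fun_eq_pi_map
    fun i => (hf.comp (hW i)).aemeasurable).trans ?_
  congr with i : 1
  rw [← Measure.map_map hf (hW i), hlaw i]

theorem ENNReal.toReal_le_of_natCast_succ_mul_le {p : ℝ≥0∞} {n k : ℕ} {a : ℝ}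
    (hp : ((n : ℝ≥0∞) + 1) * p ≤ k) (hk : (k : ℝ) ≤ a * (n + 1) + 1) :
    p.toReal ≤ a + 1 / (n + 1) := by
  have hp' := ENNReal.toReal_mono (ENNReal.natCast_ne_top k) hp
  rw [ENNReal.toReal_mul, ENNReal.toReal_natCast, ENNReal.toReal_add (ENNReal.natCast_ne_top n)
    ENNReal.one_ne_top, ENNReal.toReal_natCast, ENNReal.toReal_one] at hp'
  have hrhs : ((n : ℝ) + 1) * (a + 1 / (n + 1)) = a * (n + 1) + 1 := by
    field_simp
  rw [← mul_le_mul_iff_of_pos_left (by positivity : (0 : ℝ) < n + 1), hrhs]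
  linarith

theorem max_div_le_of_mem_Icc {l m u y c : ℝ} (hlm : l < m) (hmu : m < u)
    (hy : y ∈ Set.Icc (m - c * (m - l)) (m + c * (u - m))) :
    max ((m - y) / (m - l)) ((y - m) / (u - m)) ≤ c := by
  obtain ⟨h1, h2⟩ := hy
  refine max_le ?_ ?_ <;> rw [div_le_iff₀ (by linarith)] <;> linarith

/-- Split-conformal coverage conditional on the trained
predictor: with fixed measurable `l < m < u` on `ℝ^d`, i.i.d. pairs
`(X₁,Y₁),…,(Xₙ,Yₙ),(X,Y)` with law `μ`, conformity scores
`c(x,y) = max((m(x)-y)/(m(x)-l(x)), (y-m(x))/(u(x)-m(x)))` whose law is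
atomless, `k = ⌈(1-α)(n+1)⌉ ≤ n`, and `ĉ = c₍ₖ₎`, the expanded interval
`[m(X) - ĉ(m(X)-l(X)), m(X) + ĉ(u(X)-m(X))]` covers `Y` with probability
at most `1 - α + 1/(n+1)`: the intervals are not unnecessarily conservative. -/
theorem split_conformal_coverage_upper_bound
    {Ω : Type*} [MeasurableSpace Ω] (P : Measure Ω) [IsProbabilityMeasure P]
    (d n : ℕ)
    (μ : Measure ((Fin d → ℝ) × ℝ)) [IsProbabilityMeasure μ]
    (l m u : (Fin d → ℝ) → ℝ)
    (hl : Measurable l) (hm : Measurable m) (hu : Measurable u)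
    (hord : ∀ x, l x < m x ∧ m x < u x)
    (W : Fin (n + 1) → Ω → (Fin d → ℝ) × ℝ)
    (hWmeas : ∀ i, Measurable (W i))
    (hWindep : iIndepFun W P)
    (hWlaw : ∀ i, P.map (W i) = μ)
    (score : (Fin d → ℝ) × ℝ → ℝ)
    (hscore : score = fun p =>
      max ((m p.1 - p.2) / (m p.1 - l p.1)) ((p.2 - m p.1) / (u p.1 - m p.1)))
    (hatomless : ∀ y : ℝ, μ {p | score p = y} = 0)
    (α : ℝ)
    (k : ℕ) (hk : k = ⌈(1 - α) * ((n : ℝ) + 1)⌉₊) (hk1 : 1 ≤ k) (hkn : k ≤ n)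
    (chat : Ω → ℝ)
    (hchat : chat = fun ω =>
      kthSmallest (fun i : Fin n => score (W i.castSucc ω)) ⟨k - 1, by omega⟩) :
    (P {ω |
      m (W (Fin.last n) ω).1 -
          chat ω * (m (W (Fin.last n) ω).1 - l (W (Fin.last n) ω).1) ≤
        (W (Fin.last n) ω).2 ∧
      (W (Fin.last n) ω).2 ≤
        m (W (Fin.last n) ω).1 +
          chat ω * (u (W (Fin.last n) ω).1 - m (W (Fin.last n) ω).1)}).toReal ≤
      1 - α + 1 / ((n : ℝ) + 1) := by
  have hscore_meas : Measurable score := hscore ▸ by fun_prop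
  set ρ := μ.map score
  have : IsProbabilityMeasure ρ := Measure.isProbabilityMeasure_map hscore_meas.aemeasurable
  have : NullSingletonClass ρ := ⟨fun y => by
    rw [Measure.map_apply hscore_meas (measurableSet_singleton y)]; exact hatomless y⟩
  set S : Ω → Fin (n + 1) → ℝ := fun ω i => score (W i ω)
  have hS_meas : Measurable S := measurable_pi_lambda _ fun i => hscore_meas.comp (hWmeas i)
  have hrank : ((n : ℝ≥0∞) + 1) * P (S ⁻¹' {v | lowerCount v (Fin.last n) < k}) ≤ k := by
    rw [← Measure.map_apply hS_meas (measurableSet_lowerCount_lt _ k),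
      hWindep.map_comp_eq_pi hWmeas hWlaw hscore_meas]
    simpa using Measure.card_mul_pi_lowerCount_lt_le ρ (Fin.last n) k
  have hk_lt : (k : ℝ) < (1 - α) * ((n : ℝ) + 1) + 1 :=
    hk ▸ Nat.ceil_lt_add_one (Nat.ceil_pos.mp (hk ▸ hk1)).le
  refine ENNReal.toReal_le_of_natCast_succ_mul_le
    ((mul_le_mul_right (measure_mono fun ω hω => ?_) _).trans hrank) hk_lt.le
  obtain ⟨h1, h2⟩ := hω
  have hle : S ω (Fin.last n) ≤ chat ω := by
    simp only [S, hscore]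
    exact max_div_le_of_mem_Icc (hord _).1 (hord _).2 ⟨h1, h2⟩
  rw [hchat] at hle
  exact Nat.lt_of_le_sub_one hk1 (lowerCount_last_le_of_le_kthSmallest (S ω) _ hle)
end

section
/- Let μ be a probability measure on ℝ^d × ℝ, let (X'₁,Y'₁),…,(X'_n,Y'_n),(X,Y) be i.i.d. with law μ, let G ⊆ [0,1] be a finite set with 0 ∈ G and |G| = K+1 (K ≥ 1), and for each τ ∈ G let C_τ ⊆ ℝ^d × ℝ be a fixed measurable set with C₀ = ℝ^d × ℝ. Let α ∈ (0,1) and ε ∈ (0,α). Let p̂(τ) = (1/n)·#{ i ≤ n : (X'ᵢ,Y'ᵢ) ∈ C_τ } and let τ̂ = max{ τ ∈ G : p̂(τ) ≥ 1−(α−ε) }. If n ≥ −2·log( ε/(2K(1−α+ε/2)) ) / ε², then P( (X,Y) ∈ C_{τ̂} ) ≥ 1 − α, where the probability is over both the n holdout samples (which determine τ̂) and the independent pair (X,Y). -/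
/-!
The selected level `τ̂` is a function of the holdout sample alone, so it is independent of the
test point and `P((X,Y) ∈ C_τ̂) = ∑_τ P(τ̂ = τ) μ(C_τ)`. Call a level bad if
`μ(C_τ) < c := 1 - α + ε/2`; the level `0` is never bad, so there are at most `K` bad levels.
Selecting `τ` forces `p̂(τ) ≥ 1 - α + ε`, which for a bad level is a deviation of at least `ε/2`
above the mean, of probability at most `exp(-nε²/2)` by Hoeffding's inequality. The sample-size
condition makes the total probability of selecting a bad level at most `ε/(2c)`, and the coverage
is then at least `c (1 - ε/(2c)) = 1 - α`.
-/

open MeasureTheory ProbabilityTheory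

lemma Set.ncard_setOf_mem_eq_sum_indicator {ι E : Type*} [Fintype ι] (v : ι → E) (C : Set E) :
    ({i | v i ∈ C}.ncard : ℝ) = ∑ i, C.indicator 1 (v i) := by
  classical
  rw [Set.ncard_eq_toFinset_card', Set.toFinset_ofPred, Finset.card_filter]
  push_cast
  simp [Set.indicator_apply]

lemma measurable_ncard_setOf_mem {ι E : Type*} [Fintype ι] [MeasurableSpace E] {C : Set E}
    (hC : MeasurableSet C) : Measurable fun v : ι → E ↦ ({i | v i ∈ C}.ncard : ℝ) := by
  simp_rw [Set.ncard_setOf_mem_eq_sum_indicator]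
  exact Finset.measurable_sum _ fun i _ ↦ (measurable_one.indicator hC).comp (measurable_pi_apply i)

theorem measureReal_le_ncard_div_le_exp {Ω E ι : Type*} [Fintype ι] [MeasurableSpace Ω]
    [MeasurableSpace E] {P : Measure Ω} [IsProbabilityMeasure P] {μ : Measure E}
    {X : ι → Ω → E} (hX : ∀ i, Measurable (X i)) (hindep : iIndepFun X P)
    (hlaw : ∀ i, P.map (X i) = μ) {C : Set E} (hC : MeasurableSet C) {a δ : ℝ} (hδ : 0 ≤ δ)
    (ha : μ.real C + δ ≤ a) :
    P.real {ω | a ≤ ({i | X i ω ∈ C}.ncard : ℝ) / Fintype.card ι} ≤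
      Real.exp (-2 * Fintype.card ι * δ ^ 2) := by
  rcases (Fintype.card ι).eq_zero_or_pos with hN | hN
  · simp [hN]
  set N : ℝ := (Fintype.card ι : ℝ)
  have hN' : (0 : ℝ) < N := by simpa [N] using hN
  have hmean : ∀ i, P[fun ω ↦ C.indicator 1 (X i ω)] = μ.real C := fun i ↦ by
    rw [← hlaw i, ← integral_indicator_one hC, integral_map (hX i).aemeasurable
      (measurable_one.indicator hC).aestronglyMeasurable]
  have hsubG : ∀ i ∈ Finset.univ, HasSubgaussianMGF (fun ω ↦ C.indicator 1 (X i ω) - μ.real C)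
      ((‖(1 : ℝ) - 0‖₊ / 2) ^ 2) P := fun i _ ↦ by
    rw [← hmean i]
    refine hasSubgaussianMGF_of_mem_Icc
      ((measurable_one.indicator hC).comp (hX i)).aemeasurable (ae_of_all _ fun ω ↦ ?_)
    by_cases h : X i ω ∈ C <;> simp [h]
  have hindep' : iIndepFun (fun i ω ↦ C.indicator 1 (X i ω) - μ.real C) P :=
    hindep.comp _ fun _ ↦ (measurable_one.indicator hC).sub_const _
  calc P.real {ω | a ≤ ({i | X i ω ∈ C}.ncard : ℝ) / N}
      ≤ P.real {ω | N * δ ≤ ∑ i, (C.indicator 1 (X i ω) - μ.real C)} := by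
        refine measureReal_mono fun ω hω ↦ ?_
        simp only [Set.mem_ofPred_eq, le_div_iff₀ hN', Set.ncard_setOf_mem_eq_sum_indicator,
          Finset.sum_sub_distrib, Finset.sum_const, Finset.card_univ, nsmul_eq_mul] at hω ⊢
        nlinarith
    _ ≤ Real.exp (-(N * δ) ^ 2 / (2 * ∑ i : ι, ((‖(1 : ℝ) - 0‖₊ / 2) ^ 2 : NNReal))) :=
        HasSubgaussianMGF.measure_sum_ge_le_of_iIndepFun hindep' hsubG (by positivity)
    _ = Real.exp (-2 * N * δ ^ 2) := by simp [N, field]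

lemma ProbabilityTheory.iIndepFun.indepFun_init_last {Ω β : Type*} [MeasurableSpace Ω]
    [MeasurableSpace β] {P : Measure Ω} {n : ℕ} {Z : Fin (n + 1) → Ω → β}
    (hZ : ∀ i, Measurable (Z i)) (hindep : iIndepFun Z P) :
    IndepFun (fun ω (i : Fin n) ↦ Z i.castSucc ω) (Z (Fin.last n)) P := by
  have hdisj : Disjoint (Finset.univ.map Fin.castSuccEmb) {Fin.last n} := by
    simp [Fin.castSucc_ne_last]
  exact (hindep.indepFun_finset _ _ hdisj hZ).comp
    (measurable_pi_lambda _ fun (i : Fin n) ↦ measurable_pi_apply ⟨i.castSucc, by simp⟩)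
    (measurable_pi_apply ⟨Fin.last n, Finset.mem_singleton_self _⟩)

section MaxFeasible

variable {ι β : Type*} [ConditionallyCompleteLinearOrder ι] {G : Finset ι} {F : ι → Set β}

noncomputable def maxFeasible (G : Finset ι) (F : ι → Set β) (v : β) : ι :=
  sSup {τ | τ ∈ G ∧ v ∈ F τ}

lemma maxFeasible_mem {v : β} (hne : ∃ τ ∈ G, v ∈ F τ) :
    maxFeasible G F v ∈ G ∧ v ∈ F (maxFeasible G F v) :=
  Set.Nonempty.csSup_mem hne (G.finite_toSet.subset fun _ h ↦ h.1)

lemma maxFeasible_eq_iff {v : β} (hne : ∃ τ ∈ G, v ∈ F τ) {τ : ι} (hτ : τ ∈ G) :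
    maxFeasible G F v = τ ↔ v ∈ F τ ∧ ∀ τ' ∈ G, τ < τ' → v ∉ F τ' := by
  have hbdd : BddAbove {τ | τ ∈ G ∧ v ∈ F τ} := (G.finite_toSet.subset fun _ h ↦ h.1).bddAbove
  constructor
  · rintro rfl
    exact ⟨(maxFeasible_mem hne).2, fun τ' hτ' hlt hF ↦ (le_csSup hbdd ⟨hτ', hF⟩).not_gt hlt⟩
  · rintro ⟨hF, hmax⟩
    exact IsGreatest.csSup_eq ⟨⟨hτ, hF⟩, fun τ' ⟨hτ', hF'⟩ ↦ not_lt.1 fun hlt ↦ hmax τ' hτ' hlt hF'⟩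

lemma measurableSet_maxFeasible_preimage_singleton [MeasurableSpace β]
    (hne : ∀ v, ∃ τ ∈ G, v ∈ F τ) (hF : ∀ τ ∈ G, MeasurableSet (F τ)) {τ : ι} (hτ : τ ∈ G) :
    MeasurableSet (maxFeasible G F ⁻¹' {τ}) := by
  classical
  have : maxFeasible G F ⁻¹' {τ} = F τ ∩ ⋂ τ' ∈ G.filter (τ < ·), (F τ')ᶜ := by
    ext v; simp [maxFeasible_eq_iff (hne v) hτ]
  rw [this]
  exact (hF τ hτ).inter
    (Finset.measurableSet_biInter _ fun τ' hτ' ↦ (hF τ' (Finset.mem_filter.1 hτ').1).compl)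

end MaxFeasible

lemma Finset.mul_one_sub_le_sum_mul {ι : Type*} {G : Finset ι} {w m : ι → ℝ}
    (hw : ∀ i ∈ G, 0 ≤ w i) (hm : ∀ i ∈ G, 0 ≤ m i) (hsum : ∑ i ∈ G, w i = 1) {c η : ℝ}
    (hη : ∑ i ∈ G with m i < c, w i ≤ η) (hc : 0 ≤ c) :
    c * (1 - η) ≤ ∑ i ∈ G, w i * m i := by
  classical
  calc c * (1 - η) ≤ c * (∑ i ∈ G, w i - ∑ i ∈ G with m i < c, w i) := by
        rw [hsum]; gcongr
    _ = ∑ i ∈ G with ¬m i < c, c * w i := by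
        rw [← Finset.sum_filter_add_sum_filter_not G (m · < c) w, add_sub_cancel_left,
          Finset.mul_sum]
    _ ≤ ∑ i ∈ G with ¬m i < c, w i * m i := Finset.sum_le_sum fun i hi ↦ by
        obtain ⟨hiG, hci⟩ := Finset.mem_filter.1 hi
        nlinarith [hw i hiG]
    _ ≤ ∑ i ∈ G, w i * m i := Finset.sum_le_sum_of_subset_of_nonneg (Finset.filter_subset _ _)
        fun i hi _ ↦ mul_nonneg (hw i hi) (hm i hi)

section Selection

variable {Ω β E ι : Type*} [MeasurableSpace Ω] [MeasurableSpace β] [MeasurableSpace E]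
  {P : Measure Ω} {V : Ω → β} {W : Ω → E} {G : Finset ι} {sel : β → ι} {C : ι → Set E}

theorem measureReal_mem_comp_eq_sum [IsFiniteMeasure P] (hV : Measurable V) (hW : Measurable W)
    (hVW : IndepFun V W P) (hsel : ∀ v, sel v ∈ G)
    (hlevel : ∀ τ ∈ G, MeasurableSet (sel ⁻¹' {τ})) (hC : ∀ τ ∈ G, MeasurableSet (C τ)) :
    P.real {ω | W ω ∈ C (sel (V ω))} =
      ∑ τ ∈ G, P.real (V ⁻¹' (sel ⁻¹' {τ})) * (P.map W).real (C τ) := by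
  have hunion : {ω | W ω ∈ C (sel (V ω))} = ⋃ τ ∈ G, V ⁻¹' (sel ⁻¹' {τ}) ∩ W ⁻¹' C τ := by
    ext ω; simp [hsel]
  have hdisj : (G : Set ι).PairwiseDisjoint fun τ ↦ V ⁻¹' (sel ⁻¹' {τ}) ∩ W ⁻¹' C τ :=
    fun τ _ τ' _ hne ↦ Set.disjoint_left.2 fun ω h h' ↦ hne (h.1.symm.trans h'.1)
  rw [hunion, measureReal_biUnion_finset hdisj
    fun τ hτ ↦ (hV (hlevel τ hτ)).inter (hW (hC τ hτ))]
  refine Finset.sum_congr rfl fun τ hτ ↦ ?_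
  rw [measureReal_def, hVW.measure_inter_preimage_eq_mul _ _ (hlevel τ hτ) (hC τ hτ),
    ENNReal.toReal_mul, map_measureReal_apply hW (hC τ hτ)]
  rfl

theorem mul_one_sub_le_measureReal_mem_comp [IsProbabilityMeasure P] (hV : Measurable V)
    (hW : Measurable W) (hVW : IndepFun V W P) (hsel : ∀ v, sel v ∈ G)
    (hlevel : ∀ τ ∈ G, MeasurableSet (sel ⁻¹' {τ})) (hC : ∀ τ ∈ G, MeasurableSet (C τ))
    {c η : ℝ} (hc : 0 ≤ c)
    (hη : ∑ τ ∈ G with (P.map W).real (C τ) < c, P.real (V ⁻¹' (sel ⁻¹' {τ})) ≤ η) :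
    c * (1 - η) ≤ P.real {ω | W ω ∈ C (sel (V ω))} := by
  have hsum : ∑ τ ∈ G, P.real (V ⁻¹' (sel ⁻¹' {τ})) = 1 := by
    have : IsProbabilityMeasure (P.map W) := Measure.isProbabilityMeasure_map hW.aemeasurable
    simpa using (measureReal_mem_comp_eq_sum hV hW hVW hsel hlevel
      (C := fun _ ↦ Set.univ) (by simp)).symm
  rw [measureReal_mem_comp_eq_sum hV hW hVW hsel hlevel hC]
  exact Finset.mul_one_sub_le_sum_mul (fun _ _ ↦ measureReal_nonneg)
    (fun _ _ ↦ measureReal_nonneg) hsum hη hc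

end Selection

lemma exp_neg_two_mul_half_sq_le {n ε x : ℝ} (hε : ε ≠ 0) (hx : 0 < x)
    (hn : -2 * Real.log x / ε ^ 2 ≤ n) : Real.exp (-2 * n * (ε / 2) ^ 2) ≤ x := by
  rw [← Real.le_log_iff_exp_le hx]
  rw [div_le_iff₀ (by positivity)] at hn
  linarith

theorem pav_average_coverage_general
    {Ω : Type*} [MeasurableSpace Ω] (P : Measure Ω) [IsProbabilityMeasure P]
    (d n K : ℕ) (hn : 1 ≤ n) (hK : 1 ≤ K)
    (μ : Measure ((Fin d → ℝ) × ℝ)) [IsProbabilityMeasure μ]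
    (Z : Fin (n + 1) → Ω → (Fin d → ℝ) × ℝ)
    (hZmeas : ∀ i, Measurable (Z i))
    (hZindep : iIndepFun Z P)
    (hZlaw : ∀ i, P.map (Z i) = μ)
    (G : Finset ℝ) (hG0 : (0 : ℝ) ∈ G)
    (hGcard : G.card = K + 1)
    (C : ℝ → Set ((Fin d → ℝ) × ℝ))
    (hCmeas : ∀ τ ∈ G, MeasurableSet (C τ))
    (hC0 : C 0 = Set.univ)
    (α ε : ℝ) (hα : α ∈ Set.Ioo (0 : ℝ) 1) (hε : ε ∈ Set.Ioo (0 : ℝ) α)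
    (phat : ℝ → Ω → ℝ)
    (hphat : phat = fun τ ω =>
      (({i : Fin n | Z i.castSucc ω ∈ C τ}).ncard : ℝ) / n)
    (τhat : Ω → ℝ)
    (hτhat : τhat = fun ω => sSup {τ : ℝ | τ ∈ G ∧ 1 - (α - ε) ≤ phat τ ω})
    (hnlarge : (-2 : ℝ) * Real.log (ε / (2 * K * (1 - α + ε / 2))) / ε ^ 2 ≤ n) :
    1 - α ≤ (P {ω | Z (Fin.last n) ω ∈ C (τhat ω)}).toReal := by
  obtain ⟨hα0, hα1⟩ := hα
  obtain ⟨hε0, hεα⟩ := hε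
  set c := 1 - α + ε / 2 with hc
  have hc0 : 0 < c := by linarith
  set V : Ω → Fin n → (Fin d → ℝ) × ℝ := fun ω i ↦ Z i.castSucc ω
  set F : ℝ → Set (Fin n → (Fin d → ℝ) × ℝ) :=
    fun τ ↦ {v | 1 - (α - ε) ≤ ({i | v i ∈ C τ}.ncard : ℝ) / n}
  have hfeasible : ∀ v, ∃ τ ∈ G, v ∈ F τ := fun v ↦ ⟨0, hG0, by
    simp only [F, Set.mem_ofPred_eq, hC0, Set.mem_univ, Set.ofPred_true, Set.ncard_univ,
      Nat.card_eq_fintype_card, Fintype.card_fin, div_self (show (n : ℝ) ≠ 0 by positivity)]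
    linarith⟩
  have hF : ∀ τ ∈ G, MeasurableSet (F τ) := fun τ hτ ↦
    measurableSet_le measurable_const ((measurable_ncard_setOf_mem (hCmeas τ hτ)).div_const _)
  have hbad : ∀ τ ∈ G, μ.real (C τ) < c →
      P.real (V ⁻¹' (maxFeasible G F ⁻¹' {τ})) ≤ Real.exp (-2 * n * (ε / 2) ^ 2) := by
    intro τ hτ hτc
    have hoeffding := measureReal_le_ncard_div_le_exp (fun i : Fin n ↦ hZmeas i.castSucc)
      (hZindep.precomp (Fin.castSucc_injective n)) (fun i ↦ hZlaw i.castSucc) (hCmeas τ hτ)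
      (half_pos hε0).le (a := 1 - (α - ε)) (by linarith)
    rw [Fintype.card_fin] at hoeffding
    exact (measureReal_mono fun ω hω ↦ hω ▸ (maxFeasible_mem (hfeasible (V ω))).2).trans hoeffding
  have hbad_card : (G.filter fun τ ↦ μ.real (C τ) < c).card ≤ K := by
    have := Finset.card_lt_card <| (Finset.filter_ssubset (p := fun τ ↦ μ.real (C τ) < c)).2
      ⟨0, hG0, by simp only [hC0, probReal_univ, not_lt]; linarith⟩
    omega
  have hbad_sum :
      ∑ τ ∈ G with μ.real (C τ) < c, P.real (V ⁻¹' (maxFeasible G F ⁻¹' {τ})) ≤ ε / (2 * c) := by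
    have hexp := exp_neg_two_mul_half_sq_le hε0.ne' (by positivity) hnlarge
    calc _ ≤ (G.filter fun τ ↦ μ.real (C τ) < c).card • Real.exp (-2 * n * (ε / 2) ^ 2) :=
          Finset.sum_le_card_nsmul _ _ _ fun τ hτ ↦
            hbad τ (Finset.mem_filter.1 hτ).1 (Finset.mem_filter.1 hτ).2
      _ ≤ K * (ε / (2 * K * c)) := by rw [nsmul_eq_mul]; gcongr
      _ = ε / (2 * c) := by field_simp
  rw [hτhat, hphat, ← measureReal_def]
  calc 1 - α = c * (1 - ε / (2 * c)) := by field_simp; ring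
    _ ≤ _ := mul_one_sub_le_measureReal_mem_comp (measurable_pi_lambda _ fun i ↦ hZmeas _)
        (hZmeas _) (hZindep.indepFun_init_last hZmeas) (fun v ↦ (maxFeasible_mem (hfeasible v)).1)
        (fun _ ↦ measurableSet_maxFeasible_preimage_singleton hfeasible hF) hCmeas hc0.le
        (hZlaw (Fin.last n) ▸ hbad_sum)

/-- **Corollary 1, average coverage of the conservative PAV
selection.** With i.i.d. samples `(X'₁,Y'₁),…,(X'ₙ,Y'ₙ),(X,Y)` of law `μ` on
`ℝ^d × ℝ`, a finite grid `G ⊆ [0,1]` with `0 ∈ G` and `|G| = K + 1` (`K ≥ 1`),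
fixed measurable regions `C_τ` with `C₀` everything, `α ∈ (0,1)`, `ε ∈ (0,α)`,
empirical frequencies `p̂(τ)` from the first `n` samples, and
`τ̂ = max{τ ∈ G : p̂(τ) ≥ 1 - (α - ε)}`: if
`n ≥ -2·log(ε/(2K(1-α+ε/2)))/ε²`, then `P((X,Y) ∈ C_τ̂) ≥ 1 - α`, the
probability being over the holdout samples and the independent test pair. -/
theorem pav_average_coverage
    {Ω : Type*} [MeasurableSpace Ω] (P : Measure Ω) [IsProbabilityMeasure P]
    (d n K : ℕ) (hn : 1 ≤ n) (hK : 1 ≤ K)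
    (μ : Measure ((Fin d → ℝ) × ℝ)) [IsProbabilityMeasure μ]
    (Z : Fin (n + 1) → Ω → (Fin d → ℝ) × ℝ)
    (hZmeas : ∀ i, Measurable (Z i))
    (hZindep : iIndepFun Z P)
    (hZlaw : ∀ i, P.map (Z i) = μ)
    (G : Finset ℝ) (hGsub : ↑G ⊆ Set.Icc (0 : ℝ) 1) (hG0 : (0 : ℝ) ∈ G)
    (hGcard : G.card = K + 1)
    (C : ℝ → Set ((Fin d → ℝ) × ℝ))
    (hCmeas : ∀ τ ∈ G, MeasurableSet (C τ))
    (hC0 : C 0 = Set.univ)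
    (α ε : ℝ) (hα : α ∈ Set.Ioo (0 : ℝ) 1) (hε : ε ∈ Set.Ioo (0 : ℝ) α)
    (phat : ℝ → Ω → ℝ)
    (hphat : phat = fun τ ω =>
      (({i : Fin n | Z i.castSucc ω ∈ C τ}).ncard : ℝ) / n)
    (τhat : Ω → ℝ)
    (hτhat : τhat = fun ω => sSup {τ : ℝ | τ ∈ G ∧ 1 - (α - ε) ≤ phat τ ω})
    (hnlarge : (-2 : ℝ) * Real.log (ε / (2 * K * (1 - α + ε / 2))) / ε ^ 2 ≤ n) :
    1 - α ≤ (P {ω | Z (Fin.last n) ω ∈ C (τhat ω)}).toReal :=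
  pav_average_coverage_general P d n K hn hK μ Z hZmeas hZindep hZlaw G hG0 hGcard C hCmeas hC0 α ε
    hα hε phat hphat τhat hτhat hnlarge
end

section
/- Let c₁, …, c_{n+1} be i.i.d. real-valued random variables whose common distribution is atomless. Define the rank R = 1 + #{ i ≤ n : cᵢ < c_{n+1} }. Then R is uniformly distributed on {1, 2, …, n+1}, i.e., P(R = j) = 1/(n+1) for every j ∈ {1,…,n+1}. -/
/-!
The coordinates of an i.i.d. sample with atomless law are almost surely distinct, and the joint
law is invariant under permutations of the coordinates. When the coordinates are distinct, their
ranks are a permutation of `0, …, n`, so for fixed `k` the events "coordinate `m` has rank `k`"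
partition the sample space up to a null set. Exchangeability (via a transposition) gives them
all the same probability, which must therefore be `1 / (n + 1)`.
-/

open MeasureTheory ProbabilityTheory Finset

section Combinatorics

variable {ι α : Type*} [Fintype ι] [LinearOrder α]

def rank (x : ι → α) (m : ι) : ℕ := #{i | x i < x m}

lemma rank_lt_card (x : ι → α) (m : ι) : rank x m < Fintype.card ι :=
  card_lt_univ_of_notMem (x := m) (by simp)

lemma rank_lt_rank {x : ι → α} {a b : ι} (hab : x a < x b) : rank x a < rank x b := by
  refine card_lt_card ((ssubset_iff_of_subset fun i hi ↦ ?_).2 ⟨a, by simp [hab]⟩)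
  simp only [mem_filter, mem_univ, true_and] at hi ⊢
  exact hi.trans hab

lemma rank_injective {x : ι → α} (hx : Function.Injective x) : Function.Injective (rank x) := by
  intro a b hab
  rcases lt_trichotomy (x a) (x b) with h | h | h
  · exact absurd hab (rank_lt_rank h).ne
  · exact hx h
  · exact absurd hab (rank_lt_rank h).ne'

lemma exists_rank_eq {x : ι → α} (hx : Function.Injective x) {k : ℕ}
    (hk : k < Fintype.card ι) : ∃ m, rank x m = k := by
  let r : ι → Fin (Fintype.card ι) := fun m ↦ ⟨rank x m, rank_lt_card x m⟩
  have hr : Function.Bijective r := (Fintype.bijective_iff_injective_and_card r).2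
    ⟨fun a b h ↦ rank_injective hx (congrArg Fin.val h), (Fintype.card_fin _).symm⟩
  obtain ⟨m, hm⟩ := hr.2 ⟨k, hk⟩
  exact ⟨m, congrArg Fin.val hm⟩

lemma rank_comp_perm (x : ι → α) (e : Equiv.Perm ι) (m : ι) :
    rank (x ∘ e) m = rank x (e m) := by
  simp only [rank, card_filter, Function.comp_apply]
  exact Equiv.sum_comp e fun i ↦ if x i < x (e m) then 1 else 0

lemma rank_last_eq_ncard {n : ℕ} (x : Fin (n + 1) → α) :
    rank x (Fin.last n) = {i : Fin n | x i.castSucc < x (Fin.last n)}.ncard := by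
  rw [Set.ncard_eq_toFinset_card', Set.toFinset_ofPred, rank, card_filter, card_filter,
    Fin.sum_univ_castSucc]
  simp

end Combinatorics

lemma measure_eq_inv_card_of_ae_partition {X ι : Type*} [MeasurableSpace X] [Fintype ι]
    {ν : Measure X} {A : ι → Set X} (hA : ∀ i, NullMeasurableSet (A i) ν)
    (hdisj : Pairwise (Function.onFun (AEDisjoint ν) A)) (hcover : ν (⋃ i, A i) = 1)
    (heq : ∀ i j, ν (A i) = ν (A j)) (i : ι) :
    ν (A i) = (Fintype.card ι : ENNReal)⁻¹ := by
  refine ENNReal.eq_inv_of_mul_eq_one_left ?_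
  rw [← hcover, measure_iUnion₀ hdisj hA, tsum_fintype]
  simp [heq _ i, mul_comm]

section Measure

variable {ι α : Type*} [Fintype ι] [MeasurableSpace α]

lemma measurePreserving_comp_perm (μ : Measure α) [SigmaFinite μ] (e : Equiv.Perm ι) :
    MeasurePreserving (fun x : ι → α ↦ x ∘ e) (Measure.pi fun _ ↦ μ) (Measure.pi fun _ ↦ μ) :=
  measurePreserving_arrowCongr' _ _ e.symm (MeasurableEquiv.refl α) fun _ ↦ .id μ

lemma ae_prod_fst_ne_snd [MeasurableEq α] (μ ν : Measure α) [SFinite ν] [NullSingletonClass ν] :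
    ∀ᵐ p ∂μ.prod ν, p.1 ≠ p.2 :=
  (Measure.ae_prod_iff_ae_ae measurableSet_diagonal.compl).2 <|
    .of_forall fun a ↦ (Measure.ae_ne ν a).mono fun _ h ↦ h.symm

lemma ae_injective_pi [MeasurableEq α] (μ : Measure α) [IsProbabilityMeasure μ]
    [NullSingletonClass μ] : ∀ᵐ x ∂Measure.pi (fun _ : ι ↦ μ), Function.Injective x := by
  have hcoord : iIndepFun (fun i (x : ι → α) ↦ x i) (Measure.pi fun _ ↦ μ) :=
    iIndepFun_pi (X := fun _ ↦ id) fun _ ↦ aemeasurable_id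
  have hpair : ∀ a b, ∀ᵐ x ∂Measure.pi (fun _ : ι ↦ μ), x a = x b → a = b := by
    intro a b
    by_cases hab : a = b
    · exact .of_forall fun _ _ ↦ hab
    have hlaw : (Measure.pi fun _ : ι ↦ μ).map (fun x ↦ (x a, x b)) = μ.prod μ := by
      rw [(indepFun_iff_map_prod_eq_prod_map_map (measurable_pi_apply a).aemeasurable
        (measurable_pi_apply b).aemeasurable).1 (hcoord.indepFun hab),
        (measurePreserving_eval _ a).map_eq, (measurePreserving_eval _ b).map_eq]
    have hne := ae_of_ae_map (f := fun x : ι → α ↦ (x a, x b)) (by fun_prop)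
      (hlaw ▸ ae_prod_fst_ne_snd μ μ)
    exact hne.mono fun _ hx h ↦ absurd h hx
  filter_upwards [ae_all_iff.2 fun a ↦ ae_all_iff.2 (hpair a)] with x hx a b using hx a b

end Measure

section Exchangeable

variable {ι α : Type*} [Fintype ι] [TopologicalSpace α] [LinearOrder α] [OrderClosedTopology α]
  [SecondCountableTopology α] [MeasurableSpace α] [OpensMeasurableSpace α]

lemma measurableSet_rank_eq (m : ι) (k : ℕ) : MeasurableSet {x : ι → α | rank x m = k} := by
  simp only [rank, card_filter]
  refine Finset.measurable_sum _ (fun i _ ↦ Measurable.ite ?_ measurable_const measurable_const)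
    (measurableSet_singleton k)
  exact measurableSet_lt (measurable_pi_apply i) (measurable_pi_apply m)

lemma measure_rank_eq_inv_card {ν : Measure (ι → α)} [IsProbabilityMeasure ν]
    (hexch : ∀ e : Equiv.Perm ι, MeasurePreserving (fun x ↦ x ∘ e) ν ν)
    (hinj : ∀ᵐ x ∂ν, Function.Injective x) {k : ℕ} (hk : k < Fintype.card ι) (m : ι) :
    ν {x | rank x m = k} = (Fintype.card ι : ENNReal)⁻¹ := by
  classical
  have hmeas : ∀ m, MeasurableSet {x : ι → α | rank x m = k} := (measurableSet_rank_eq · k)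
  have hnoninj : ν {x | ¬Function.Injective x} = 0 := ae_iff.1 hinj
  refine measure_eq_inv_card_of_ae_partition (A := fun m ↦ {x | rank x m = k})
    (fun m ↦ (hmeas m).nullMeasurableSet) ?_ ?_ ?_ m
  · intro a b hab
    refine measure_mono_null ?_ hnoninj
    rintro x ⟨hxa, hxb⟩ (hinjx : Function.Injective x)
    exact hab (rank_injective hinjx (hxa.trans hxb.symm))
  · rw [← measure_univ (μ := ν)]
    refine measure_congr (ae_eq_univ.2 (measure_mono_null ?_ hnoninj))
    intro x hx (hinjx : Function.Injective x)
    obtain ⟨m, hm⟩ := exists_rank_eq hinjx hk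
    exact hx (Set.mem_iUnion.2 ⟨m, hm⟩)
  · intro a b
    have hpre : (fun x : ι → α ↦ x ∘ Equiv.swap b a) ⁻¹' {x | rank x a = k} =
        {x | rank x b = k} := by
      ext x
      simp [rank_comp_perm]
    rw [← hpre, (hexch _).measure_preimage (hmeas a).nullMeasurableSet]

lemma measure_pi_rank_eq_inv_card (μ : Measure α) [IsProbabilityMeasure μ]
    [NullSingletonClass μ] {k : ℕ} (hk : k < Fintype.card ι) (m : ι) :
    Measure.pi (fun _ ↦ μ) {x | rank x m = k} = (Fintype.card ι : ENNReal)⁻¹ :=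
  measure_rank_eq_inv_card (measurePreserving_comp_perm μ) (ae_injective_pi μ) hk m

end Exchangeable

/-- If `c₁, …, c_{n+1}` are i.i.d. real random variables with
atomless common law `μ`, the rank `R = 1 + #{i ≤ n : cᵢ < c_{n+1}}` of the last
variable is uniform on `{1, …, n+1}`. -/
theorem rank_uniform
    {Ω : Type*} [MeasurableSpace Ω] (P : Measure Ω) [IsProbabilityMeasure P]
    (n : ℕ) (μ : Measure ℝ) [IsProbabilityMeasure μ] [NullSingletonClass μ]
    (c : Fin (n + 1) → Ω → ℝ)
    (hmeas : ∀ i, Measurable (c i))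
    (hindep : iIndepFun c P)
    (hlaw : ∀ i, P.map (c i) = μ)
    (R : Ω → ℕ)
    (hR : R = fun ω =>
      1 + ({i : Fin n | c i.castSucc ω < c (Fin.last n) ω}).ncard)
    (j : ℕ) (hj1 : 1 ≤ j) (hjn : j ≤ n + 1) :
    (P {ω | R ω = j}).toReal = 1 / (n + 1) := by
  have hJ : Measurable fun ω i ↦ c i ω := measurable_pi_lambda _ hmeas
  have hjoint : P.map (fun ω i ↦ c i ω) = Measure.pi fun _ ↦ μ := by
    rw [hindep.map_fun_eq_pi_map fun i ↦ (hmeas i).aemeasurable]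
    simp_rw [hlaw]
  have hevent : {ω | R ω = j} = (fun ω i ↦ c i ω) ⁻¹' {x | rank x (Fin.last n) = j - 1} := by
    ext ω
    simp only [hR, Set.mem_ofPred_eq, Set.mem_preimage, rank_last_eq_ncard]
    omega
  rw [hevent, ← Measure.map_apply hJ (measurableSet_rank_eq _ _), hjoint,
    measure_pi_rank_eq_inv_card μ (by simp; omega)]
  simp only [Fintype.card_fin, ENNReal.toReal_inv, ENNReal.toReal_natCast]
  push_cast
  ring
end
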